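/- arXiv:1907.05770 — 3 statements merged into one kernel-verified Lean document; each statement's English description precedes it below -/
import Mathlib

section
/- Let n be a positive integer and v : ℝ → Matrix (Fin n) (Fin n) ℂ be continuously differentiable (of class C¹). Then for every x ∈ ℝ and every s ∈ ℝ, writing ⁅a,b⁆ := a*b − b*a, one has ⁅v x, (deriv (fun y => Matrix.exp (s • v y)) x) * Matrix.exp (−(s • v x))⁆ = Matrix.exp (s • v x) * (deriv v x) * Matrix.exp (−(s • v x)) − deriv v x. -/
/-!
Since `v y` commutes with `exp (s • v y)` for every `y`, differentiating
`v y * exp (s • v y) = exp (s • v y) * v y` at `x` by the product rule gives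
`[v x, G] = exp (s • v x) * v' x - v' x * exp (s • v x)`, where `G` is the derivative of
`y ↦ exp (s • v y)` at `x`. Multiplying on the right by `exp (-(s • v x))`, which commutes with
`v x` and inverts `exp (s • v x)`, yields the identity; no ODE in `s` is needed.
-/

attribute [local instance] Matrix.linftyOpNormedRing Matrix.linftyOpNormedAlgebra

open NormedSpace Filter

theorem HasDerivAt.commutator_eq_of_eventually_commute {𝕜 𝔸 : Type*}
    [NontriviallyNormedField 𝕜] [NormedRing 𝔸] [NormedAlgebra 𝕜 𝔸] {u w : 𝕜 → 𝔸} {u' w' : 𝔸}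
    {x : 𝕜} (hu : HasDerivAt u u' x) (hw : HasDerivAt w w' x)
    (h : ∀ᶠ y in nhds x, Commute (u y) (w y)) :
    u x * w' - w' * u x = w x * u' - u' * w x := by
  have hwu : HasDerivAt (u * w) (w' * u x + w x * u') x :=
    (hw.mul hu).congr_of_eventuallyEq (h.mono fun y hy => hy.eq)
  rw [sub_eq_sub_iff_add_eq_add, add_comm, (hu.mul hw).unique hwu, add_comm]

section

variable {𝕂 𝔸 : Type*} [NontriviallyNormedField 𝕂] [CharZero 𝕂] [ContinuousSMul ℚ 𝕂]
  [NormedRing 𝔸] [NormedAlgebra 𝕂 𝔸] [CompleteSpace 𝔸]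

theorem commutator_deriv_exp_smul {v : 𝕂 → 𝔸} {x : 𝕂} (hv : DifferentiableAt 𝕂 v x) (s : 𝕂) :
    v x * deriv (fun y => exp (s • v y)) x - deriv (fun y => exp (s • v y)) x * v x =
      exp (s • v x) * deriv v x - deriv v x * exp (s • v x) := by
  have hexp : DifferentiableAt 𝕂 (fun y => exp (s • v y)) x :=
    (exp_analytic (s • v x)).differentiableAt.comp x (hv.const_smul s)
  exact hv.hasDerivAt.commutator_eq_of_eventually_commute hexp.hasDerivAt
    (Eventually.of_forall fun y => ((Commute.refl (v y)).smul_right s).exp_right)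

theorem commutator_deriv_exp_smul_mul_exp_neg {v : 𝕂 → 𝔸} {x : 𝕂} (hv : DifferentiableAt 𝕂 v x)
    (s : 𝕂) :
    v x * (deriv (fun y => exp (s • v y)) x * exp (-(s • v x))) -
        deriv (fun y => exp (s • v y)) x * exp (-(s • v x)) * v x =
      exp (s • v x) * deriv v x * exp (-(s • v x)) - deriv v x := by
  set G := deriv (fun y => exp (s • v y)) x
  have hG : v x * G - G * v x = exp (s • v x) * deriv v x - deriv v x * exp (s • v x) :=
    commutator_deriv_exp_smul hv s
  have hcomm : Commute (v x) (exp (-(s • v x))) :=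
    ((Commute.refl (v x)).smul_right s).neg_right.exp_right
  have hinv : exp (s • v x) * exp (-(s • v x)) = 1 := by
    have hball : ∀ a : 𝔸, a ∈ Metric.eball 0 (expSeries 𝕂 𝔸).radius := fun a =>
      (expSeries_radius_eq_top 𝕂 𝔸).symm ▸ edist_lt_top _ _
    rw [← exp_add_of_commute_of_mem_ball (Commute.refl _).neg_right (hball _) (hball _),
      add_neg_cancel, exp_zero]
  calc v x * (G * exp (-(s • v x))) - G * exp (-(s • v x)) * v x
      = (v x * G - G * v x) * exp (-(s • v x)) := by
        rw [mul_assoc G, ← hcomm.eq, sub_mul, mul_assoc, mul_assoc]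
    _ = exp (s • v x) * deriv v x * exp (-(s • v x)) - deriv v x := by
        rw [hG, sub_mul, mul_assoc (deriv v x), hinv, mul_one]

end

theorem stmt_4_general (n : ℕ) (v : ℝ → Matrix (Fin n) (Fin n) ℂ)
    (hv : ContDiff ℝ 1 v) (x s : ℝ) :
    v x * ((deriv (fun y => NormedSpace.exp (s • v y)) x) * NormedSpace.exp (-(s • v x))) -
        ((deriv (fun y => NormedSpace.exp (s • v y)) x) * NormedSpace.exp (-(s • v x))) * v x =
      NormedSpace.exp (s • v x) * (deriv v x) * NormedSpace.exp (-(s • v x)) - deriv v x :=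
  commutator_deriv_exp_smul_mul_exp_neg (hv.differentiable one_ne_zero x) s

/-- The commutator identity
`[v x, (d/dy exp (s • v y))|_x * exp (-(s • v x))] =
  exp (s • v x) * (deriv v x) * exp (-(s • v x)) - deriv v x`
for a `C¹` matrix-valued path `v`, where `[a, b] = a * b - b * a`. -/
theorem stmt_4 (n : ℕ) (hn : 0 < n) (v : ℝ → Matrix (Fin n) (Fin n) ℂ)
    (hv : ContDiff ℝ 1 v) (x s : ℝ) :
    v x * ((deriv (fun y => NormedSpace.exp (s • v y)) x) * NormedSpace.exp (-(s • v x))) -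
        ((deriv (fun y => NormedSpace.exp (s • v y)) x) * NormedSpace.exp (-(s • v x))) * v x =
      NormedSpace.exp (s • v x) * (deriv v x) * NormedSpace.exp (-(s • v x)) - deriv v x :=
  stmt_4_general n v hv x s
end

section
/- Let n be a positive integer and v : ℝ → Matrix (Fin n) (Fin n) ℂ be smooth (of class C^∞). Fix x₀ ∈ ℝ and define g : ℝ → Matrix (Fin n) (Fin n) ℂ by g s := deriv (fun x => Matrix.exp (s • v x)) x₀. Then g is differentiable and for every s ∈ ℝ its derivative satisfies deriv g s = Matrix.exp (s • v x₀) * (deriv v x₀) + g s * (v x₀). -/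
attribute [local instance] Matrix.linftyOpNormedRing Matrix.linftyOpNormedAlgebra

open NormedSpace in
/-- Mixed-derivative identity `(d/ds) ∇(e^{s v}) = e^{s v} (∇ v) + (∇ e^{s v}) v`, where `∇`
is the derivative in the base variable at the fixed point `x₀` and `v` is smooth. -/
theorem stmt_6 (n : ℕ) (hn : 0 < n) (v : ℝ → Matrix (Fin n) (Fin n) ℂ)
    (hv : ContDiff ℝ (⊤ : ℕ∞) v) (x₀ : ℝ)
    (g : ℝ → Matrix (Fin n) (Fin n) ℂ)
    (hg : g = fun s : ℝ => deriv (fun x => NormedSpace.exp (s • v x)) x₀) :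
    Differentiable ℝ g ∧
      ∀ s : ℝ, deriv g s = NormedSpace.exp (s • v x₀) * (deriv v x₀) + g s * v x₀ := by
  set F : ℝ × ℝ → Matrix (Fin n) (Fin n) ℂ := fun p => exp (p.1 • v p.2) with hFdef
  have hF : ContDiff ℝ (⊤ : ℕ∞) F := by
    have h0 : ContDiff ℝ (⊤ : ℕ∞) (fun p : ℝ × ℝ => v p.2) := hv.comp contDiff_snd
    have h1 : ContDiff ℝ (⊤ : ℕ∞) (fun p : ℝ × ℝ => p.1 • v p.2) := contDiff_fst.smul h0
    have h2 : ContDiff ℝ (⊤ : ℕ∞) (exp : Matrix (Fin n) (Fin n) ℂ → Matrix (Fin n) (Fin n) ℂ) :=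
      contDiff_iff_contDiffAt.2 fun A => (exp_analytic A).contDiffAt
    exact h2.comp h1
  have hFdiff : Differentiable ℝ F := hF.differentiable (by simp)
  -- derivative in the `x` (second) direction
  have hFx : ∀ s x : ℝ, HasDerivAt (fun x' => F (s, x')) (fderiv ℝ F (s, x) ((0 : ℝ), (1 : ℝ))) x := by
    intro s x
    have h1 : HasDerivAt (fun x' : ℝ => ((s, x') : ℝ × ℝ)) ((0 : ℝ), (1 : ℝ)) x :=
      (hasDerivAt_const x s).prodMk (hasDerivAt_id x)
    exact ((hFdiff (s, x)).hasFDerivAt).comp_hasDerivAt x h1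
  have hg' : ∀ s : ℝ, g s = fderiv ℝ F (s, x₀) ((0 : ℝ), (1 : ℝ)) := by
    intro s
    rw [hg]
    exact (hFx s x₀).deriv
  -- derivative in the `s` (first) direction
  have hFs : ∀ p : ℝ × ℝ, fderiv ℝ F p ((1 : ℝ), (0 : ℝ)) = F p * v p.2 := by
    rintro ⟨t, x⟩
    have h1 : HasDerivAt (fun t' : ℝ => ((t', x) : ℝ × ℝ)) ((1 : ℝ), (0 : ℝ)) t :=
      (hasDerivAt_id t).prodMk (hasDerivAt_const t x)
    have h2 : HasDerivAt (fun t' => F (t', x)) (fderiv ℝ F (t, x) ((1 : ℝ), (0 : ℝ))) t :=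
      by have := ((hFdiff (t, x)).hasFDerivAt).comp_hasDerivAt t h1; exact this
    have h3 : HasDerivAt (fun t' : ℝ => exp (t' • v x)) (exp (t • v x) * v x) t :=
      hasDerivAt_exp_smul_const (v x) t
    exact h2.unique h3
  -- smoothness of the derivative
  have hΦ := hF.fderiv_right (m := (⊤ : ℕ∞)) (by simp)
  have hΦdiff : Differentiable ℝ (fderiv ℝ F) := hΦ.differentiable (by simp)
  -- the function `A p = ∂ₓ F p`
  set A : ℝ × ℝ → Matrix (Fin n) (Fin n) ℂ := fun p => fderiv ℝ F p ((0 : ℝ), (1 : ℝ)) with hAdef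
  have hAfderiv : ∀ p : ℝ × ℝ, HasFDerivAt A
      ((ContinuousLinearMap.apply ℝ (Matrix (Fin n) (Fin n) ℂ) ((0 : ℝ), (1 : ℝ))).comp (fderiv ℝ (fderiv ℝ F) p)) p := by
    intro p
    exact (ContinuousLinearMap.apply ℝ (Matrix (Fin n) (Fin n) ℂ) ((0 : ℝ), (1 : ℝ))).hasFDerivAt.comp p
      (hΦdiff p).hasFDerivAt
  -- `g` has derivative along the line `s ↦ (s, x₀)`
  have hgA : g = fun s : ℝ => A (s, x₀) := funext hg'
  have hgderiv : ∀ s : ℝ,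
      HasDerivAt g (fderiv ℝ (fderiv ℝ F) (s, x₀) ((1 : ℝ), (0 : ℝ)) ((0 : ℝ), (1 : ℝ))) s := by
    intro s
    have h1 : HasDerivAt (fun s' : ℝ => ((s', x₀) : ℝ × ℝ)) ((1 : ℝ), (0 : ℝ)) s :=
      (hasDerivAt_id s).prodMk (hasDerivAt_const s x₀)
    have h2 := (hAfderiv (s, x₀)).comp_hasDerivAt s h1
    rw [hgA]
    exact h2
  constructor
  · exact fun s => (hgderiv s).differentiableAt
  · intro s
    have hsym : IsSymmSndFDerivAt ℝ F (s, x₀) :=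
      (hF.contDiffAt).isSymmSndFDerivAt (by rw [minSmoothness_of_isRCLikeNormedField]; exact WithTop.coe_le_coe.2 le_top)
    have hd : deriv g s
        = fderiv ℝ (fderiv ℝ F) (s, x₀) ((1 : ℝ), (0 : ℝ)) ((0 : ℝ), (1 : ℝ)) :=
      (hgderiv s).deriv
    rw [hd, show fderiv ℝ (fderiv ℝ F) (s, x₀) ((1 : ℝ), (0 : ℝ)) ((0 : ℝ), (1 : ℝ)) = fderiv ℝ (fderiv ℝ F) (s, x₀) ((0 : ℝ), (1 : ℝ)) ((1 : ℝ), (0 : ℝ)) from hsym.eq _ _]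
    -- now compute `∂ₓ (∂ₛ F)` at `(s, x₀)` in the `x` direction
    set B : ℝ × ℝ → Matrix (Fin n) (Fin n) ℂ := fun p => fderiv ℝ F p ((1 : ℝ), (0 : ℝ)) with hBdef
    have hBfderiv : ∀ p : ℝ × ℝ, HasFDerivAt B
        ((ContinuousLinearMap.apply ℝ (Matrix (Fin n) (Fin n) ℂ) ((1 : ℝ), (0 : ℝ))).comp (fderiv ℝ (fderiv ℝ F) p)) p := by
      intro p
      exact (ContinuousLinearMap.apply ℝ (Matrix (Fin n) (Fin n) ℂ) ((1 : ℝ), (0 : ℝ))).hasFDerivAt.comp p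
        (hΦdiff p).hasFDerivAt
    have h1 : HasDerivAt (fun x : ℝ => ((s, x) : ℝ × ℝ)) ((0 : ℝ), (1 : ℝ)) x₀ :=
      (hasDerivAt_const x₀ s).prodMk (hasDerivAt_id x₀)
    have h2 : HasDerivAt (fun x : ℝ => B (s, x))
        (fderiv ℝ (fderiv ℝ F) (s, x₀) ((0 : ℝ), (1 : ℝ)) ((1 : ℝ), (0 : ℝ))) x₀ :=
      (hBfderiv (s, x₀)).comp_hasDerivAt x₀ h1
    have hveq : ∀ x : ℝ, B (s, x) = F (s, x) * v x := fun x => hFs (s, x)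
    have hvd : HasDerivAt v (deriv v x₀) x₀ :=
      (hv.differentiable (by simp) x₀).hasDerivAt
    have h3 : HasDerivAt (fun x : ℝ => F (s, x) * v x)
        (fderiv ℝ F (s, x₀) ((0 : ℝ), (1 : ℝ)) * v x₀ + F (s, x₀) * deriv v x₀) x₀ :=
      (hFx s x₀).mul hvd
    have h2' : HasDerivAt (fun x : ℝ => F (s, x) * v x)
        (fderiv ℝ (fderiv ℝ F) (s, x₀) ((0 : ℝ), (1 : ℝ)) ((1 : ℝ), (0 : ℝ))) x₀ := by
      have : (fun x : ℝ => B (s, x)) = fun x : ℝ => F (s, x) * v x := funext hveq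
      rwa [this] at h2
    have := h2'.unique h3
    rw [this, ← hg' s]
    simp only [hFdef]
    exact add_comm _ _
end

section
/- Let 0 < δ < 1, K ≥ 0, b ≥ 0 be real numbers and set C(δ) := (δ − 1 − Real.log δ)/(Real.log δ)². Let f, f', f'' : ℝ → ℝ be functions such that for every s ∈ [0,1], f has derivative f'(s) at s and f' has derivative f''(s) at s. Assume f''(s) ≥ δ^s · K for all s ∈ [0,1] (with δ^s the real power), and f'(0) ≥ −b·√K. Then f(1) − f(0) ≥ C(δ)·K − b·√K, and consequently f(1) − f(0) ≥ −b²/(4·C(δ)). -/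
/-!
Subtracting the model `φ s = K δ^s / (log δ)²`, whose second derivative is exactly `δ^s K`,
leaves a function with nonnegative second derivative on `[0,1]`, so it lies above its tangent
line at `0`. Since `φ 1 - φ 0 - φ' 0 = C(δ) K`, this gives `f 1 - f 0 ≥ C(δ) K + f' 0`,
and completing the square in `√K` gives the uniform bound `-b² / (4 C(δ))`.
-/

open Set

lemma monotoneOn_Icc_of_hasDerivAt_nonneg {g g' : ℝ → ℝ} {a b : ℝ}
    (hg : ∀ s ∈ Icc a b, HasDerivAt g (g' s) s) (hg' : ∀ s ∈ Icc a b, 0 ≤ g' s) :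
    MonotoneOn g (Icc a b) :=
  monotoneOn_of_hasDerivWithinAt_nonneg (convex_Icc a b)
    (fun s hs => (hg s hs).continuousAt.continuousWithinAt)
    (fun s hs => (hg s (interior_subset hs)).hasDerivWithinAt)
    (fun s hs => hg' s (interior_subset hs))

theorem sub_add_mul_le_sub_of_second_deriv_le {a b : ℝ} (hab : a ≤ b)
    {φ φ' φ'' f f' f'' : ℝ → ℝ}
    (hφ : ∀ s ∈ Icc a b, HasDerivAt φ (φ' s) s) (hφ' : ∀ s ∈ Icc a b, HasDerivAt φ' (φ'' s) s)
    (hf : ∀ s ∈ Icc a b, HasDerivAt f (f' s) s) (hf' : ∀ s ∈ Icc a b, HasDerivAt f' (f'' s) s)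
    (hle : ∀ s ∈ Icc a b, φ'' s ≤ f'' s) :
    φ b - φ a + (f' a - φ' a) * (b - a) ≤ f b - f a := by
  have ha : a ∈ Icc a b := ⟨le_rfl, hab⟩
  have hb : b ∈ Icc a b := ⟨hab, le_rfl⟩
  have hmono' : MonotoneOn (fun s => f' s - φ' s) (Icc a b) :=
    monotoneOn_Icc_of_hasDerivAt_nonneg (fun s hs => (hf' s hs).sub (hφ' s hs))
      (fun s hs => sub_nonneg.2 (hle s hs))
  have hmono : MonotoneOn (fun s => f s - φ s - (f' a - φ' a) * s) (Icc a b) :=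
    monotoneOn_Icc_of_hasDerivAt_nonneg (g' := fun s => f' s - φ' s - (f' a - φ' a))
      (fun s hs => ((hf s hs).sub (hφ s hs)).sub
        (((hasDerivAt_id s).const_mul _).congr_deriv (mul_one _)))
      (fun s hs => sub_nonneg.2 (hmono' ha hs hs.1))
  have := hmono ha hb hab
  simp only at this
  linarith

lemma hasDerivAt_rpow_div_log {δ : ℝ} (hδ0 : 0 < δ) (hδ1 : δ ≠ 1) (s : ℝ) :
    HasDerivAt (fun x => δ ^ x / Real.log δ) (δ ^ s) s :=
  ((Real.hasStrictDerivAt_const_rpow hδ0 s).hasDerivAt.div_const _).congr_deriv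
    (mul_div_cancel_right₀ _ (Real.log_ne_zero_of_pos_of_ne_one hδ0 hδ1))

lemma neg_sq_div_le_mul_sub_mul_sqrt {C K : ℝ} (b : ℝ) (hC : 0 < C) (hK : 0 ≤ K) :
    -b ^ 2 / (4 * C) ≤ C * K - b * Real.sqrt K := by
  rw [div_le_iff₀ (by positivity)]
  have hsqrt : C ^ 2 * Real.sqrt K ^ 2 = C ^ 2 * K := by rw [Real.sq_sqrt hK]
  nlinarith [sq_nonneg (2 * C * Real.sqrt K - b)]

theorem stmt_9_general (δ K b : ℝ) (hδ0 : 0 < δ) (hδ1 : δ < 1) (hK : 0 ≤ K)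
    (C : ℝ) (hC : C = (δ - 1 - Real.log δ) / (Real.log δ) ^ 2)
    (f f' f'' : ℝ → ℝ)
    (hf : ∀ s ∈ Set.Icc (0 : ℝ) 1, HasDerivAt f (f' s) s)
    (hf' : ∀ s ∈ Set.Icc (0 : ℝ) 1, HasDerivAt f' (f'' s) s)
    (hf'' : ∀ s ∈ Set.Icc (0 : ℝ) 1, f'' s ≥ δ ^ s * K)
    (hf'0 : f' 0 ≥ -b * Real.sqrt K) :
    f 1 - f 0 ≥ C * K - b * Real.sqrt K ∧ f 1 - f 0 ≥ -b ^ 2 / (4 * C) := by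
  set L := Real.log δ
  have hL : L ≠ 0 := (Real.log_neg hδ0 hδ1).ne
  have hC_pos : 0 < C := hC ▸ div_pos
    (by linarith [Real.log_lt_sub_one_of_pos hδ0 hδ1.ne]) (by positivity)
  have hE := hasDerivAt_rpow_div_log hδ0 hδ1.ne
  have hcompare := sub_add_mul_le_sub_of_second_deriv_le zero_le_one
    (φ := fun s => K / L * (δ ^ s / L)) (φ' := fun s => K * (δ ^ s / L))
    (φ'' := fun s => K * δ ^ s)
    (fun s _ => ((hE s).const_mul _).congr_deriv (by field_simp)) (fun s _ => (hE s).const_mul K)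
    hf hf' (fun s hs => by linarith [hf'' s hs])
  have hCK : C * K = K / L * (δ ^ (1 : ℝ) / L) - K / L * (δ ^ (0 : ℝ) / L)
      - K * (δ ^ (0 : ℝ) / L) := by
    rw [hC, Real.rpow_one, Real.rpow_zero]
    field_simp
  have hmain : C * K - b * Real.sqrt K ≤ f 1 - f 0 := by linarith
  exact ⟨hmain, (neg_sq_div_le_mul_sub_mul_sqrt b hC_pos hK).trans hmain⟩

/-- Analytic skeleton of the lower bound for the Donaldson functional on δ-bounded metrics:
if `f'' s ≥ δ^s · K` on `[0,1]` and `f' 0 ≥ -b·√K`, then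
`f 1 - f 0 ≥ C(δ)·K - b·√K ≥ -b²/(4·C(δ))` with `C(δ) = (δ - 1 - log δ)/(log δ)²`. -/
theorem stmt_9 (δ K b : ℝ) (hδ0 : 0 < δ) (hδ1 : δ < 1) (hK : 0 ≤ K) (hb : 0 ≤ b)
    (C : ℝ) (hC : C = (δ - 1 - Real.log δ) / (Real.log δ) ^ 2)
    (f f' f'' : ℝ → ℝ)
    (hf : ∀ s ∈ Set.Icc (0 : ℝ) 1, HasDerivAt f (f' s) s)
    (hf' : ∀ s ∈ Set.Icc (0 : ℝ) 1, HasDerivAt f' (f'' s) s)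
    (hf'' : ∀ s ∈ Set.Icc (0 : ℝ) 1, f'' s ≥ δ ^ s * K)
    (hf'0 : f' 0 ≥ -b * Real.sqrt K) :
    f 1 - f 0 ≥ C * K - b * Real.sqrt K ∧ f 1 - f 0 ≥ -b ^ 2 / (4 * C) :=
  stmt_9_general δ K b hδ0 hδ1 hK C hC f f' f'' hf hf' hf'' hf'0
end
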